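/- Let ρ̂ > 0 and C > 0, and let l : (0, ρ̂] → ℝ be locally absolutely continuous with l(ρ) > 0 for all ρ ∈ (0, ρ̂], |l'(ρ)| ≤ C·l(ρ)² for almost every ρ, and l(ρ) → ∞ as ρ → 0⁺. Let c ≥ C and let v : (0, ρ̂] → ℝ be a locally absolutely continuous function with v'(ρ) = −c·l(ρ)·v(ρ) for almost every ρ and v(ρ̂) > 0. Then v(ρ) ≥ (v(ρ̂)/l(ρ̂))·l(ρ) for all ρ ∈ (0, ρ̂], and consequently v is not square-integrable near 0: ∫_0^ρ̂ v(t)² dt = ∞. -/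

import Mathlib

/-!
Put `K = v(ρ̂)/l(ρ̂)`. Since `|l'| ≤ C l² ≤ c l²`, the function `K l - v` satisfies
`(K l - v)' ≥ -K C l² + c l v ≥ -c l (K l - v)` and vanishes at `ρ̂`, so a backward Grönwall
argument gives `K l ≤ v`. If `v²` were integrable near `0`, then so would be `l²`, and
`l(ρ) = l(ρ̂) - ∫_ρ^ρ̂ l' ≤ l(ρ̂) + C ∫_0^ρ̂ l²` would stay bounded, contradicting `l → ∞`.
-/

noncomputable section
open MeasureTheory Set Filter

/-- `l` is locally absolutely continuous on `(0, ρ̂]` with almost-everywhere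
derivative `l'`: on every compact subinterval `[a, b] ⊆ (0, ρ̂]` the derivative `l'`
is integrable and the fundamental theorem of calculus `l b − l a = ∫_a^b l'` holds. -/
def LocAbsolutelyContinuousOnIoc (l l' : ℝ → ℝ) (ρmax : ℝ) : Prop :=
  (∀ a ∈ Set.Ioc (0:ℝ) ρmax, IntegrableOn l' (Set.Icc a ρmax) volume) ∧
    ∀ a ∈ Set.Ioc (0:ℝ) ρmax, ∀ b ∈ Set.Ioc (0:ℝ) ρmax,
      l b = l a + ∫ t in a..b, l' t

open intervalIntegral Topology

section IntegralLeft

variable {f : ℝ → ℝ} {a b : ℝ}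

theorem ContinuousOn.continuousOn_integral_left (hf : ContinuousOn f (Icc a b)) (hab : a ≤ b) :
    ContinuousOn (fun x => ∫ t in x..b, f t) (Icc a b) := by
  have hprim := continuousOn_primitive_interval_left (μ := volume) (b := b)
    (uIcc_of_le hab ▸ hf.integrableOn_Icc)
  rwa [uIcc_of_le hab] at hprim

theorem ContinuousOn.hasDerivAt_integral_left (hf : ContinuousOn f (Icc a b)) {x : ℝ}
    (hx : x ∈ Ioo a b) : HasDerivAt (fun y => ∫ t in y..b, f t) (-f x) x :=
  integral_hasDerivAt_left
    ((hf.mono (uIcc_of_le hx.2.le ▸ Icc_subset_Icc_left hx.1.le)).intervalIntegrable)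
    ((hf.mono Ioo_subset_Icc_self).stronglyMeasurableAtFilter isOpen_Ioo x hx)
    (hf.continuousAt (Icc_mem_nhds hx.1 hx.2))

end IntegralLeft

/-- Backward Grönwall inequality with zero terminal data. With `Φ x = ∫_x^b g φ` and
`B x = ∫_x^b g`, the function `Φ · exp (-B)` has derivative `g · (Φ - φ) · exp (-B) ≥ 0`
and vanishes at `b`. -/
theorem nonpos_of_le_integral_mul_self {φ g : ℝ → ℝ} {a b : ℝ} (hab : a ≤ b)
    (hφ : ContinuousOn φ (Icc a b)) (hg : ContinuousOn g (Icc a b))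
    (hg₀ : ∀ x ∈ Icc a b, 0 ≤ g x) (hle : ∀ x ∈ Icc a b, φ x ≤ ∫ t in x..b, g t * φ t) :
    ∀ x ∈ Icc a b, φ x ≤ 0 := by
  set Φ : ℝ → ℝ := fun x => ∫ t in x..b, g t * φ t
  set B : ℝ → ℝ := fun x => ∫ t in x..b, g t
  have hmono : MonotoneOn (fun x => Φ x * Real.exp (-B x)) (Icc a b) := by
    refine monotoneOn_of_hasDerivWithinAt_nonneg (convex_Icc a b)
      ((hg.mul hφ).continuousOn_integral_left hab |>.mul
        (hg.continuousOn_integral_left hab).neg.rexp)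
      (f' := fun x => Real.exp (-B x) * (g x * (Φ x - φ x))) (fun x hx => ?_) (fun x hx => ?_)
    · rw [interior_Icc] at hx
      have hΦ : HasDerivAt Φ (-(g x * φ x)) x := (hg.mul hφ).hasDerivAt_integral_left hx
      have hB : HasDerivAt (fun y => Real.exp (-B y)) (Real.exp (-B x) * g x) x := by
        simpa using (hg.hasDerivAt_integral_left hx).neg.exp
      exact ((hΦ.mul hB).congr_deriv (by ring)).hasDerivWithinAt
    · rw [interior_Icc] at hx
      have hx' := Ioo_subset_Icc_self hx
      exact mul_nonneg (Real.exp_pos _).le (mul_nonneg (hg₀ x hx') (sub_nonneg.2 (hle x hx')))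
  intro x hx
  have hΦx : Φ x * Real.exp (-B x) ≤ 0 := by
    simpa [Φ] using hmono hx (right_mem_Icc.2 hab) hx.2
  exact (hle x hx).trans (nonpos_of_mul_nonpos_left hΦx (Real.exp_pos _))

namespace LocAbsolutelyContinuousOnIoc

variable {f f' : ℝ → ℝ} {b : ℝ}

theorem intervalIntegrable (hf : LocAbsolutelyContinuousOnIoc f f' b) {a : ℝ}
    (ha : a ∈ Ioc 0 b) : IntervalIntegrable f' volume a b :=
  (uIcc_of_le ha.2 ▸ hf.1 a ha).intervalIntegrable

theorem sub_eq_integral (hf : LocAbsolutelyContinuousOnIoc f f' b) {a : ℝ} (ha : a ∈ Ioc 0 b) :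
    f b - f a = ∫ t in a..b, f' t := by
  rw [hf.2 a ha b (right_mem_Ioc.2 (ha.1.trans_le ha.2))]
  ring

theorem continuousOn (hf : LocAbsolutelyContinuousOnIoc f f' b) {a : ℝ} (ha : a ∈ Ioc 0 b) :
    ContinuousOn f (Icc a b) := by
  have hprim := continuousOn_primitive_interval (μ := volume) (uIcc_of_le ha.2 ▸ hf.1 a ha)
  rw [uIcc_of_le ha.2] at hprim
  exact (continuousOn_const.add hprim).congr fun x hx => hf.2 a ha x ⟨ha.1.trans_le hx.1, hx.2⟩

theorem const_mul_sub {g g' : ℝ → ℝ} (hf : LocAbsolutelyContinuousOnIoc f f' b)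
    (hg : LocAbsolutelyContinuousOnIoc g g' b) (K : ℝ) :
    LocAbsolutelyContinuousOnIoc (fun x => K * f x - g x) (fun x => K * f' x - g' x) b := by
  refine ⟨fun a ha => ((hf.1 a ha).const_mul K).sub (hg.1 a ha), fun a ha x hx => ?_⟩
  have hfi := (hf.intervalIntegrable ha).trans (hf.intervalIntegrable hx).symm
  have hgi := (hg.intervalIntegrable ha).trans (hg.intervalIntegrable hx).symm
  show K * f x - g x = K * f a - g a + ∫ t in a..x, (K * f' t - g' t)
  rw [integral_sub (hfi.const_mul K) hgi, intervalIntegral.integral_const_mul, hf.2 a ha x hx,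
    hg.2 a ha x hx]
  ring

theorem nonpos_of_neg_mul_le_deriv {g : ℝ → ℝ} (hf : LocAbsolutelyContinuousOnIoc f f' b)
    (hg : ∀ a ∈ Ioc 0 b, ContinuousOn g (Icc a b)) (hg₀ : ∀ x ∈ Ioc 0 b, 0 ≤ g x)
    (hderiv : ∀ᵐ x ∂(volume.restrict (Ioc 0 b)), -(g x * f x) ≤ f' x) (hb : f b ≤ 0) :
    ∀ x ∈ Ioc 0 b, f x ≤ 0 := by
  intro a ha
  have hsub : Icc a b ⊆ Ioc 0 b := fun t ht => ⟨ha.1.trans_le ht.1, ht.2⟩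
  refine nonpos_of_le_integral_mul_self ha.2 (hf.continuousOn ha) (hg a ha)
    (fun x hx => hg₀ x (hsub hx)) (fun x hx => ?_) a (left_mem_Icc.2 ha.2)
  have hsub' : Icc x b ⊆ Ioc 0 b := (Icc_subset_Icc_left hx.1).trans hsub
  have hgf : IntervalIntegrable (fun t => g t * f t) volume x b :=
    (((hg a ha).mul (hf.continuousOn ha)).mono
      (uIcc_of_le hx.2 ▸ Icc_subset_Icc_left hx.1)).intervalIntegrable
  have hmono : ∫ t in x..b, -(g t * f t) ≤ ∫ t in x..b, f' t :=
    integral_mono_ae_restrict hx.2 hgf.neg (hf.intervalIntegrable (hsub hx))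
      (ae_restrict_of_ae_restrict_of_subset hsub' hderiv)
  rw [intervalIntegral.integral_neg, ← hf.sub_eq_integral (hsub hx)] at hmono
  linarith

/-- Integrability of `w` would give `f ≤ f b + ∫_0^b w` on `(0, b]`. -/
theorem not_integrableOn_of_neg_le_deriv {w : ℝ → ℝ} (hf : LocAbsolutelyContinuousOnIoc f f' b)
    (hb : 0 < b) (hlim : Tendsto f (𝓝[>] 0) atTop) (hw₀ : ∀ x ∈ Ioc 0 b, 0 ≤ w x)
    (hderiv : ∀ᵐ x ∂(volume.restrict (Ioc 0 b)), -w x ≤ f' x) :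
    ¬ IntegrableOn w (Ioc 0 b) := by
  intro hw
  have hbdd : ∀ x ∈ Ioc 0 b, f x ≤ f b + ∫ t in Ioc 0 b, w t := by
    intro x hx
    have hsub : Ioc x b ⊆ Ioc 0 b := Ioc_subset_Ioc_left hx.1.le
    have hwx : IntervalIntegrable w volume x b :=
      (intervalIntegrable_iff_integrableOn_Ioc_of_le hx.2).2 (hw.mono_set hsub)
    have hmono : ∫ t in x..b, -w t ≤ ∫ t in x..b, f' t :=
      integral_mono_ae_restrict hx.2 hwx.neg (hf.intervalIntegrable hx)
        (ae_restrict_of_ae_restrict_of_subset (Icc_subset_Ioc_iff hx.2 |>.2 ⟨hx.1, le_rfl⟩) hderiv)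
    have hIoc : ∫ t in Ioc x b, w t ≤ ∫ t in Ioc 0 b, w t :=
      setIntegral_mono_set hw ((ae_restrict_mem measurableSet_Ioc).mono hw₀) hsub.eventuallyLE
    rw [intervalIntegral.integral_neg, ← hf.sub_eq_integral hx, integral_of_le hx.2] at hmono
    linarith
  obtain ⟨x, hlarge, hx⟩ := ((hlim.eventually
    (eventually_gt_atTop (f b + ∫ t in Ioc 0 b, w t))).and (Ioc_mem_nhdsGT hb)).exists
  exact (hbdd x hx).not_gt hlarge

end LocAbsolutelyContinuousOnIoc

/-- **Limit point case at `0`.**  Under hypotheses (H), if `v` solves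
`v' = −c·l·v` a.e. with `c ≥ C` and `v(ρ̂) > 0`, then `v(ρ) ≥ (v(ρ̂)/l(ρ̂))·l(ρ)`
on `(0, ρ̂]`, and consequently `v` is not square-integrable near `0`. -/
theorem limit_point_solution_lower_bound
    (ρmax C : ℝ) (hρ : 0 < ρmax) (hC : 0 < C)
    (l l' : ℝ → ℝ)
    (hpos : ∀ ρ ∈ Set.Ioc (0:ℝ) ρmax, 0 < l ρ)
    (hacl : LocAbsolutelyContinuousOnIoc l l' ρmax)
    (hbound : ∀ᵐ ρ ∂(volume.restrict (Set.Ioc (0:ℝ) ρmax)), |l' ρ| ≤ C * (l ρ) ^ 2)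
    (hlim : Tendsto l (nhdsWithin 0 (Set.Ioi 0)) atTop)
    (c : ℝ) (hc : C ≤ c)
    (v v' : ℝ → ℝ)
    (hacv : LocAbsolutelyContinuousOnIoc v v' ρmax)
    (hv' : ∀ᵐ ρ ∂(volume.restrict (Set.Ioc (0:ℝ) ρmax)), v' ρ = -c * l ρ * v ρ)
    (hvpos : 0 < v ρmax) :
    (∀ ρ ∈ Set.Ioc (0:ℝ) ρmax, v ρmax / l ρmax * l ρ ≤ v ρ) ∧
    ¬ IntegrableOn (fun t => (v t) ^ 2) (Set.Ioc (0:ℝ) ρmax) volume := by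
  have hlmax : 0 < l ρmax := hpos ρmax (right_mem_Ioc.2 hρ)
  set K := v ρmax / l ρmax
  have hK : 0 < K := div_pos hvpos hlmax
  have hlower : ∀ ρ ∈ Ioc 0 ρmax, K * l ρ ≤ v ρ := by
    have hderiv : ∀ᵐ x ∂(volume.restrict (Ioc 0 ρmax)),
        -(c * l x * (K * l x - v x)) ≤ K * l' x - v' x := by
      filter_upwards [hbound, hv'] with x hbx hvx
      have hKl' := mul_le_mul_of_nonneg_left (abs_le.1 hbx).1 hK.le
      have hCc : K * (C * l x ^ 2) ≤ K * (c * l x ^ 2) := by gcongr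
      rw [hvx]
      linarith
    have hmax : K * l ρmax - v ρmax ≤ 0 := (sub_eq_zero.2 (div_mul_cancel₀ _ hlmax.ne')).le
    intro ρ hρ'
    have := (hacl.const_mul_sub hacv K).nonpos_of_neg_mul_le_deriv
      (fun a ha => continuousOn_const.mul (hacl.continuousOn ha))
      (fun x hx => mul_nonneg (hC.le.trans hc) (hpos x hx).le) hderiv hmax ρ hρ'
    linarith
  refine ⟨hlower, fun hv => ?_⟩
  refine hacl.not_integrableOn_of_neg_le_deriv hρ hlim (w := fun t => C / K ^ 2 * v t ^ 2)
    (fun x _ => by positivity) ?_ (hv.const_mul _)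
  filter_upwards [hbound, ae_restrict_mem measurableSet_Ioc] with x hbx hx
  have hsq : (K * l x) ^ 2 ≤ v x ^ 2 := pow_le_pow_left₀ (mul_pos hK (hpos x hx)).le (hlower x hx) 2
  have hl : C * l x ^ 2 ≤ C / K ^ 2 * v x ^ 2 := calc
    C * l x ^ 2 = C / K ^ 2 * (K * l x) ^ 2 := by field_simp
    _ ≤ C / K ^ 2 * v x ^ 2 := by gcongr
  linarith [(abs_le.1 hbx).1]
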